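/- Every B ∈ SU_n can be written as a product B = A_{(θ_1,x_1)}·A_{(θ_2,x_2)}⋯A_{(θ_k,x_k)} (with k ≥ 0, the empty product being Iₙ) where each x_j is a unit vector with x_j ∈_min ℂ^{m_j}, the indices satisfy 1 ≤ m_1 < m_2 < ⋯ < m_k ≤ n, and each θ_j is not an integer multiple of 2π. -/

import Mathlib

open Matrix Complex

/-- The pseudo-rotation `A_{(θ,x)} = Iₙ − (1 − e^{iθ})·x·x̄ᵀ`. -/
noncomputable def pseudoRot {n : ℕ} (θ : ℝ) (x : Fin n → ℂ) : Matrix (Fin n) (Fin n) ℂ :=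
  1 - (1 - Complex.exp (θ * Complex.I)) • Matrix.vecMulVec x (star x)

/-- `x` minimally belongs to `ℂ^k` (1-based coordinates `k+1,…,n` vanish and the
`k`-th coordinate is nonzero). -/
def minBelongs {n : ℕ} (x : Fin n → ℂ) (k : ℕ) : Prop :=
  (∀ i : Fin n, k ≤ (i : ℕ) → x i = 0) ∧ ∃ i : Fin n, (i : ℕ) + 1 = k ∧ x i ≠ 0

lemma pr_apply {n : ℕ} (θ : ℝ) (x : Fin n → ℂ) (i j : Fin n) :
    pseudoRot θ x i j = (if i = j then (1:ℂ) else 0)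
      - (1 - Complex.exp (θ * Complex.I)) * (x i * (starRingEnd ℂ) (x j)) := by
  simp [pseudoRot, Matrix.sub_apply, Matrix.one_apply, Matrix.vecMulVec_apply]

lemma pr_star {n : ℕ} (θ : ℝ) (x : Fin n → ℂ) :
    star (pseudoRot θ x) = 1 - (starRingEnd ℂ) (1 - Complex.exp (θ * Complex.I)) • Matrix.vecMulVec x (star x) := by
  ext i j
  rw [Matrix.star_apply, pr_apply]
  simp only [Matrix.sub_apply, Matrix.smul_apply, Matrix.one_apply, Matrix.vecMulVec_apply,
    Pi.star_apply]
  by_cases h : i = j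
  · subst h
    simp only [if_pos rfl, Complex.star_def, _root_.map_sub, _root_.map_mul, _root_.map_one,
      Complex.conj_conj, smul_eq_mul, if_true]
    ring
  · rw [if_neg h, if_neg (fun hh => h hh.symm)]
    simp only [Complex.star_def, _root_.map_sub, _root_.map_mul, _root_.map_zero, _root_.map_one,
      Complex.conj_conj, smul_eq_mul]
    ring

lemma exp_conj_unit (θ : ℝ) :
    Complex.exp (θ * Complex.I) * (starRingEnd ℂ) (Complex.exp (θ * Complex.I)) = 1 := by
  rw [← Complex.exp_conj, ← Complex.exp_add]
  have h : (θ:ℂ)*Complex.I + (starRingEnd ℂ) ((θ:ℂ)*Complex.I) = 0 := by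
    simp [_root_.map_mul, Complex.conj_ofReal, Complex.conj_I]
  rw [h, Complex.exp_zero]

lemma vmv_sq {n : ℕ} (x : Fin n → ℂ) (hx : star x ⬝ᵥ x = 1) :
    Matrix.vecMulVec x (star x) * Matrix.vecMulVec x (star x) = Matrix.vecMulVec x (star x) := by
  ext i j
  simp only [Matrix.mul_apply, Matrix.vecMulVec_apply, Pi.star_apply]
  have h2 : ∑ l, x i * star (x l) * (x l * star (x j))
      = (x i * star (x j)) * ∑ l, star (x l) * x l := by
    rw [Finset.mul_sum]; congr 1; ext l; ring
  have h1 : ∑ l, star (x l) * x l = 1 := by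
    simpa [dotProduct, Pi.star_apply] using hx
  rw [h2, h1, mul_one]

lemma pr_unitary {n : ℕ} (θ : ℝ) (x : Fin n → ℂ) (hx : star x ⬝ᵥ x = 1) :
    pseudoRot θ x ∈ Matrix.unitaryGroup (Fin n) ℂ := by
  rw [Matrix.mem_unitaryGroup_iff']
  set e := Complex.exp (θ * Complex.I) with he
  set μ : ℂ := 1 - e with hμ
  set c : ℂ := (starRingEnd ℂ) μ with hc
  set P := Matrix.vecMulVec x (star x) with hP
  have hs : star (pseudoRot θ x) = 1 - c • P := pr_star θ x
  have hPP : P * P = P := vmv_sq x hx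
  have habs : e * (starRingEnd ℂ) e = 1 := exp_conj_unit θ
  have key : c + μ - μ*c = 0 := by
    rw [hc, hμ, _root_.map_sub, _root_.map_one]
    linear_combination -habs
  rw [hs]
  show (1 - c • P) * (1 - μ • P) = 1
  simp only [sub_mul, mul_sub, one_mul, mul_one, smul_mul_assoc, mul_smul_comm, smul_smul, hPP]
  rw [sub_sub, sub_eq_self]
  rw [smul_sub, smul_smul, ← add_sub_assoc, ← add_smul, ← sub_smul, key, zero_smul]

lemma aux {n : ℕ} (d : ℕ) : d ≤ n → ∀ B : Matrix (Fin n) (Fin n) ℂ,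
    B ∈ Matrix.unitaryGroup (Fin n) ℂ →
    (∀ i : Fin n, d ≤ (i:ℕ) → ∀ j, B i j = (1 : Matrix (Fin n) (Fin n) ℂ) i j) →
    ∃ (k : ℕ) (m : ℕ → ℕ) (θ : ℕ → ℝ) (x : ℕ → Fin n → ℂ),
      (∀ i j, i < j → j < k → m i < m j) ∧
      (∀ j < k, 1 ≤ m j ∧ m j ≤ d) ∧
      (∀ j < k, star (x j) ⬝ᵥ x j = 1 ∧ minBelongs (x j) (m j)) ∧
      (∀ j < k, ¬ ∃ t : ℤ, θ j = 2 * Real.pi * t) ∧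
      B = (List.ofFn fun j : Fin k => pseudoRot (θ j) (x j)).prod := by
  induction d with
  | zero =>
    intro _ B hU hfix
    refine ⟨0, id, 0, 0, by omega, by omega, by omega, by omega, ?_⟩
    have : B = 1 := by ext i j; rw [hfix i (Nat.zero_le _) j]
    simp [this]
  | succ d ih =>
    intro hd1 B hU hfix
    have hdn : d < n := hd1
    set d' : Fin n := ⟨d, hdn⟩ with hd'
    have hBB : B * star B = 1 := Matrix.mem_unitaryGroup_iff.mp hU
    -- row d is supported on coordinates ≤ d
    have h1 : ∀ j : Fin n, d < (j:ℕ) → B d' j = 0 := by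
      intro j hj
      have hj' : d' ≠ j := fun h => absurd hj (by rw [← h]; simp [hd'])
      have := congrFun (congrFun hBB d') j
      rw [Matrix.mul_apply] at this
      simp only [Matrix.star_apply] at this
      have hrw : ∀ l, B d' l * star (B j l) = if j = l then B d' l else 0 := by
        intro l
        rw [hfix j (by omega) l]
        by_cases h : j = l <;> simp [Matrix.one_apply, h]
      rw [Finset.sum_congr rfl (fun l _ => hrw l)] at this
      simpa [Matrix.one_apply, hj', Finset.sum_ite_eq] using this
    -- norm of row d is 1
    have hsum1 : ∑ l, B d' l * (starRingEnd ℂ) (B d' l) = 1 := by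
      have := congrFun (congrFun hBB d') d'
      rw [Matrix.mul_apply] at this
      simpa [Matrix.star_apply, Matrix.one_apply, Complex.star_def] using this
    have h2 : ∑ l, Complex.normSq (B d' l) = 1 := by
      have : ((∑ l, Complex.normSq (B d' l) : ℝ) : ℂ) = 1 := by
        push_cast
        rw [← hsum1]
        exact Finset.sum_congr rfl fun l _ => by rw [Complex.mul_conj]
      exact_mod_cast this
    by_cases hcase : ∀ j, B d' j = (1 : Matrix (Fin n) (Fin n) ℂ) d' j
    · have hfix' : ∀ i : Fin n, d ≤ (i:ℕ) → ∀ j, B i j = (1 : Matrix (Fin n) (Fin n) ℂ) i j := by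
        intro i hi j
        rcases Nat.eq_or_lt_of_le hi with h | h
        · have : i = d' := by apply Fin.ext; simp [hd', ← h]
          rw [this]; exact hcase j
        · exact hfix i h j
      obtain ⟨k, m, θ, x, p1, p2, p3, p4, p5⟩ := ih (by omega) B hU hfix'
      exact ⟨k, m, θ, x, p1, fun j hj => ⟨(p2 j hj).1, le_trans (p2 j hj).2 (Nat.le_succ d)⟩, p3, p4, p5⟩
    · push_neg at hcase
      obtain ⟨j0, hj0⟩ := hcase
      set a : ℂ := 1 - B d' d' with ha_def
      -- positivity of real part
      have ha_re : 0 < a.re := by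
        by_contra hcon
        push_neg at hcon
        set z := B d' d' with hz_def
        have hre : 1 ≤ z.re := by
          have : a.re = 1 - z.re := by simp [ha_def]
          linarith [this ▸ hcon]
        have hle : Complex.normSq z ≤ 1 := by
          have := Finset.single_le_sum (f := fun l => Complex.normSq (B d' l))
            (fun l _ => Complex.normSq_nonneg _) (Finset.mem_univ d')
          rw [h2] at this; exact this
        have hnz : Complex.normSq z = z.re * z.re + z.im * z.im := Complex.normSq_apply z
        have hz1 : z = 1 := by
          apply Complex.ext
          · simp; nlinarith
          · simp; nlinarith
        have hrest : ∀ l, l ≠ d' → B d' l = 0 := by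
          intro l hl
          have hsplit := Finset.add_sum_erase Finset.univ (fun l => Complex.normSq (B d' l))
            (Finset.mem_univ d')
          rw [h2] at hsplit
          have hd0 : Complex.normSq (B d' d') = 1 := by rw [← hz_def, hz1]; simp
          have hzero : ∑ l ∈ Finset.univ.erase d', Complex.normSq (B d' l) = 0 := by
            linarith [hsplit, hd0]
          have := (Finset.sum_eq_zero_iff_of_nonneg
            (fun l _ => Complex.normSq_nonneg (B d' l))).mp hzero l
            (Finset.mem_erase.mpr ⟨hl, Finset.mem_univ l⟩)
          exact Complex.normSq_eq_zero.mp this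
        apply hj0
        by_cases hj : j0 = d'
        · rw [hj, ← hz_def, hz1, Matrix.one_apply, if_pos rfl]
        · rw [hrest j0 hj, Matrix.one_apply, if_neg (fun h => hj h.symm)]
      have ha : a ≠ 0 := fun h => by simp [h] at ha_re
      have hca : (starRingEnd ℂ) a ≠ 0 := by
        simpa using ha
      set s : ℝ := Real.sqrt (2 * a.re) with hs_def
      have hs0 : 0 < s := Real.sqrt_pos.mpr (by linarith)
      have hsC : (s:ℂ) ≠ 0 := by exact_mod_cast hs0.ne'
      have hs2 : (s:ℂ) * s = a + (starRingEnd ℂ) a := by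
        rw [Complex.add_conj, ← Complex.ofReal_mul, Real.mul_self_sqrt (by linarith : (0:ℝ) ≤ 2 * a.re)]
      set w : Fin n → ℂ := fun j => B d' j - (1 : Matrix (Fin n) (Fin n) ℂ) d' j with hw_def
      set x : Fin n → ℂ := fun j => (starRingEnd ℂ) (w j) / s with hx_def
      have hwd : w d' = -a := by
        show B d' d' - (1 : Matrix (Fin n) (Fin n) ℂ) d' d' = -a
        rw [Matrix.one_apply_eq, ha_def]; ring
      set lam : ℂ := -(a / (starRingEnd ℂ) a) with hlam_def
      have habs1 : ‖lam‖ = 1 := by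
        rw [hlam_def, norm_neg, norm_div, Complex.norm_conj,
          div_self (norm_ne_zero_iff.mpr ha)]
      set θ0 : ℝ := lam.arg with hθ0
      have hexp : Complex.exp (θ0 * Complex.I) = lam := by
        have h := Complex.norm_mul_exp_arg_mul_I lam
        rw [habs1] at h; simpa [hθ0] using h
      have hlam1 : lam ≠ 1 := by
        intro h
        rw [hlam_def] at h
        have h4 : a / (starRingEnd ℂ) a = -1 := by linear_combination -h
        rw [div_eq_iff hca] at h4
        have h3 : a = -((starRingEnd ℂ) a) := by linear_combination h4
        have h5 := congrArg Complex.re h3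
        rw [Complex.neg_re, Complex.conj_re] at h5
        linarith
      have hμw : (1 - lam) * (starRingEnd ℂ) (w d') = -((s:ℂ) * s) := by
        rw [hwd, hs2, hlam_def, map_neg]
        field_simp
        ring
      have hconjx : ∀ j, (starRingEnd ℂ) (x j) = w j / s := by
        intro j; simp [hx_def, map_div₀, Complex.conj_ofReal]
      have hx_high : ∀ j : Fin n, d < (j:ℕ) → x j = 0 := by
        intro j hj
        have hj' : d' ≠ j := fun h => absurd hj (by rw [← h]; simp [hd'])
        simp [hx_def, hw_def, h1 j hj, Matrix.one_apply, hj']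
      have hterm : ∀ l, w l * (starRingEnd ℂ) (w l)
          = B d' l * (starRingEnd ℂ) (B d' l)
            - (if d' = l then B d' l + (starRingEnd ℂ) (B d' l) - 1 else 0) := by
        intro l
        by_cases h : d' = l
        · simp only [hw_def, Matrix.one_apply, if_pos h, _root_.map_sub, _root_.map_one]
          ring
        · simp [hw_def, Matrix.one_apply, h]
      have hww : ∑ l, w l * (starRingEnd ℂ) (w l) = (s:ℂ) * s := by
        rw [Finset.sum_congr rfl fun l _ => hterm l, Finset.sum_sub_distrib, hsum1,
          Finset.sum_ite_eq, if_pos (Finset.mem_univ d'), hs2, ha_def, _root_.map_sub,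
          _root_.map_one]
        ring
      have hxx : star x ⬝ᵥ x = 1 := by
        have hterm2 : ∀ l, star (x l) * x l = (w l * (starRingEnd ℂ) (w l)) / ((s:ℂ) * s) := by
          intro l
          rw [Complex.star_def, hconjx, hx_def]
          field_simp
        simp only [dotProduct, Pi.star_apply]
        rw [Finset.sum_congr rfl fun l _ => hterm2 l, ← Finset.sum_div, hww,
          div_self (mul_ne_zero hsC hsC)]
      have hA : ∀ i j, pseudoRot θ0 x i j
          = (if i = j then (1:ℂ) else 0) - (1 - lam) * ((starRingEnd ℂ) (w i) * w j) / ((s:ℂ) * s) := by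
        intro i j
        rw [pr_apply, hexp]
        have hx2 : x i * (starRingEnd ℂ) (x j) = (starRingEnd ℂ) (w i) * w j / ((s:ℂ) * s) := by
          rw [hconjx, hx_def]
          field_simp
        rw [hx2]
        ring
      have hA_row : ∀ j, pseudoRot θ0 x d' j = B d' j := by
        intro j
        rw [hA d' j]
        have h3 : (1 - lam) * ((starRingEnd ℂ) (w d') * w j) / ((s:ℂ) * s) = -w j := by
          rw [← mul_assoc, hμw]
          field_simp
        rw [h3]
        simp only [hw_def, Matrix.one_apply]
        ring
      have hA_col_high : ∀ j : Fin n, d < (j:ℕ) → ∀ i, pseudoRot θ0 x i j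
          = (1 : Matrix (Fin n) (Fin n) ℂ) i j := by
        intro j hj i
        rw [pr_apply, hx_high j hj]
        simp [Matrix.one_apply]
      have hAu : pseudoRot θ0 x ∈ Matrix.unitaryGroup (Fin n) ℂ := pr_unitary θ0 x hxx
      have hAAs : pseudoRot θ0 x * star (pseudoRot θ0 x) = 1 := Matrix.mem_unitaryGroup_iff.mp hAu
      have hsAA : star (pseudoRot θ0 x) * pseudoRot θ0 x = 1 := Matrix.mem_unitaryGroup_iff'.mp hAu
      set C := B * star (pseudoRot θ0 x) with hC_def
      have hCA : C * pseudoRot θ0 x = B := by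
        rw [hC_def, Matrix.mul_assoc, hsAA, Matrix.mul_one]
      have hCu : C ∈ Matrix.unitaryGroup (Fin n) ℂ := mul_mem hU (Unitary.star_mem hAu)
      have hC_rows : ∀ i : Fin n, d ≤ (i:ℕ) → ∀ j, C i j = (1 : Matrix (Fin n) (Fin n) ℂ) i j := by
        intro i hi j
        rw [hC_def, Matrix.mul_apply]
        simp only [Matrix.star_apply]
        rcases Nat.eq_or_lt_of_le hi with h | h
        · have hi' : i = d' := Fin.ext (by simp [← h, hd'])
          have hBA : ∀ l, B i l = pseudoRot θ0 x i l := by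
            intro l; rw [hi']; exact (hA_row l).symm
          have h4 := congrFun (congrFun hAAs i) j
          rw [Matrix.mul_apply] at h4
          simp only [Matrix.star_apply] at h4
          rw [Finset.sum_congr rfl fun l _ => by rw [hBA l]]
          exact h4
        · have hrw : ∀ l, B i l * star (pseudoRot θ0 x j l)
              = if i = l then star (pseudoRot θ0 x j l) else 0 := by
            intro l
            rw [hfix i (by omega) l]
            by_cases hh : i = l <;> simp [Matrix.one_apply, hh]
          rw [Finset.sum_congr rfl fun l _ => hrw l, Finset.sum_ite_eq,
            if_pos (Finset.mem_univ i), hA_col_high i h j]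
          by_cases hh : j = i
          · subst hh; simp [Matrix.one_apply]
          · simp [Matrix.one_apply, hh, Ne.symm hh]
      obtain ⟨k, m, θ', x', p1, p2, p3, p4, p5⟩ := ih (by omega) C hCu hC_rows
      set m2 : ℕ → ℕ := fun j => if j = k then d+1 else m j with hm2
      set θ2 : ℕ → ℝ := fun j => if j = k then θ0 else θ' j with hθ2
      set x2 : ℕ → Fin n → ℂ := fun j => if j = k then x else x' j with hx2f
      have hm2lt : ∀ j, j < k → m2 j = m j := fun j hj => by
        simp only [hm2]; rw [if_neg (by omega)]
      have hθ2lt : ∀ j, j < k → θ2 j = θ' j := fun j hj => by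
        simp only [hθ2]; rw [if_neg (by omega)]
      have hx2lt : ∀ j, j < k → x2 j = x' j := fun j hj => by
        simp only [hx2f]; rw [if_neg (by omega)]
      have hm2k : m2 k = d+1 := by simp [hm2]
      have hθ2k : θ2 k = θ0 := by simp [hθ2]
      have hx2k : x2 k = x := by simp [hx2f]
      refine ⟨k+1, m2, θ2, x2, ?_, ?_, ?_, ?_, ?_⟩
      · intro i j hij hjk
        rcases Nat.lt_succ_iff_lt_or_eq.mp hjk with h | rfl
        · rw [hm2lt i (by omega), hm2lt j h]; exact p1 i j hij h
        · rw [hm2lt i (by omega), hm2k]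
          have := (p2 i (by omega)).2; omega
      · intro j hj
        rcases Nat.lt_succ_iff_lt_or_eq.mp hj with h | rfl
        · rw [hm2lt j h]
          exact ⟨(p2 j h).1, by have := (p2 j h).2; omega⟩
        · rw [hm2k]; omega
      · intro j hj
        rcases Nat.lt_succ_iff_lt_or_eq.mp hj with h | rfl
        · rw [hx2lt j h, hm2lt j h]; exact p3 j h
        · rw [hx2k, hm2k]
          refine ⟨hxx, fun i hi => hx_high i (by omega), ⟨d', by simp [hd'], ?_⟩⟩
          rw [hx_def]
          simp only [hwd, map_neg]
          exact div_ne_zero (neg_ne_zero.mpr hca) hsC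
      · intro j hj
        rcases Nat.lt_succ_iff_lt_or_eq.mp hj with h | rfl
        · rw [hθ2lt j h]; exact p4 j h
        · rw [hθ2k]
          rintro ⟨t, ht⟩
          apply hlam1
          rw [← hexp, hθ0] at *
          rw [ht]
          rw [show ((2 * Real.pi * (t:ℝ) : ℝ) : ℂ) * Complex.I
              = (t:ℂ) * (2 * (Real.pi:ℂ) * Complex.I) by push_cast; ring]
          exact Complex.exp_int_mul_two_pi_mul_I t
      · have hofn := List.ofFn_succ' (f := fun j : Fin (k+1) => pseudoRot (θ2 ↑j) (x2 ↑j))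
        rw [hofn, List.prod_concat]
        simp only [Fin.coe_castSucc, Fin.val_last]
        rw [hθ2k, hx2k]
        have hfn : (fun i : Fin k => pseudoRot (θ2 ↑i) (x2 ↑i))
            = fun i : Fin k => pseudoRot (θ' ↑i) (x' ↑i) :=
          funext fun i => by rw [hθ2lt _ i.is_lt, hx2lt _ i.is_lt]
        rw [hfn, ← p5, hCA]

theorem stmt7 {n : ℕ} (B : Matrix (Fin n) (Fin n) ℂ)
    (hU : B ∈ Matrix.unitaryGroup (Fin n) ℂ) (hdet : B.det = 1) :
    ∃ (k : ℕ) (m : ℕ → ℕ) (θ : ℕ → ℝ) (x : ℕ → Fin n → ℂ),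
      (∀ i j, i < j → j < k → m i < m j) ∧
      (∀ j < k, 1 ≤ m j ∧ m j ≤ n) ∧
      (∀ j < k, star (x j) ⬝ᵥ x j = 1 ∧ minBelongs (x j) (m j)) ∧
      (∀ j < k, ¬ ∃ t : ℤ, θ j = 2 * Real.pi * t) ∧
      B = (List.ofFn fun j : Fin k => pseudoRot (θ j) (x j)).prod := by
  exact aux n le_rfl B hU (fun i hi j => absurd i.is_lt (by omega))
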